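/- Let (a_x)_{x≥1} and (b_x)_{x≥1} be strictly positive real sequences with ∑_{x≥1} a_x + ∑_{x≥1} b_x = 1, and set b₀ = 0. Define the transition probabilities k(x, x') = ∑_{y∈ℕ} π_{X|Y}(x'|y) π_{Y|X}(y|x) on ℕ = {1,2,3,…}. Then k has the birth-death form: k(1,1) = 1 − p₁; k(x, x+1) = p_x for x ≥ 1; k(x, x−1) = q_x for x ≥ 2; k(x, x) = r_x for x ≥ 2; and k(x, x') = 0 otherwise, where p_x = a_x b_x / ((a_x + b_{x−1})(a_x + b_x)), q_x = a_{x−1} b_{x−1} / ((a_x + b_{x−1})(a_{x−1} + b_{x−1})), and r_x = 1 − p_x − q_x. -/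

import Mathlib

/-!
From `x`, the `Y`-step moves to `x` or `x - 1` and the `X`-step from `y` moves to `y` or `y + 1`,
so `k(x, ·)` is supported on `{x - 1, x, x + 1}` and each entry is a product of two conditional
weights. The diagonal entry equals `1 - p_x - q_x` because the weights `a_y/(a_y+b_y)` and
`b_y/(a_y+b_y)` sum to one; at `x = 1` the convention `b₀ = 0` makes `q₁` vanish.
-/

/-- Conditional mass function π_{X|Y}(x|y). -/
noncomputable def piXgY (a b : ℕ → ℝ) (x y : ℕ) : ℝ :=
  (a y / (a y + b y)) * (if x = y then 1 else 0) +
    (b y / (a y + b y)) * (if x = y + 1 then 1 else 0)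

/-- Conditional mass function π_{Y|X}(y|x). -/
noncomputable def piYgX (a b : ℕ → ℝ) (y x : ℕ) : ℝ :=
  (a x / (a x + b (x - 1))) * (if y = x then 1 else 0) +
    (b (x - 1) / (a x + b (x - 1))) * (if y = x - 1 then 1 else 0)

/-- Transition probabilities k(x,x') = ∑_{y ∈ ℕ} π_{X|Y}(x'|y) π_{Y|X}(y|x),
the sum running over y ∈ {1,2,3,…}. -/
noncomputable def kBD (a b : ℕ → ℝ) (x x' : ℕ) : ℝ :=
  ∑' y : ℕ, piXgY a b x' (y + 1) * piYgX a b (y + 1) x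

/-- p_x = a_x b_x / ((a_x + b_{x−1})(a_x + b_x)). -/
noncomputable def pBD (a b : ℕ → ℝ) (x : ℕ) : ℝ :=
  a x * b x / ((a x + b (x - 1)) * (a x + b x))

/-- q_x = a_{x−1} b_{x−1} / ((a_x + b_{x−1})(a_{x−1} + b_{x−1})). -/
noncomputable def qBD (a b : ℕ → ℝ) (x : ℕ) : ℝ :=
  a (x - 1) * b (x - 1) / ((a x + b (x - 1)) * (a (x - 1) + b (x - 1)))

/-- r_x = 1 − p_x − q_x. -/
noncomputable def rBD (a b : ℕ → ℝ) (x : ℕ) : ℝ := 1 - pBD a b x - qBD a b x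

section
variable {a b : ℕ → ℝ}

lemma piXgY_self (y : ℕ) : piXgY a b y y = a y / (a y + b y) := by
  simp [piXgY]

lemma piXgY_succ_self (y : ℕ) : piXgY a b (y + 1) y = b y / (a y + b y) := by
  simp [piXgY]

lemma piXgY_pred_self {x : ℕ} (hx : 1 ≤ x) :
    piXgY a b x (x - 1) = b (x - 1) / (a (x - 1) + b (x - 1)) := by
  obtain ⟨y, rfl⟩ : ∃ y, x = y + 1 := ⟨x - 1, by omega⟩
  exact piXgY_succ_self y

lemma piXgY_eq_zero {x y : ℕ} (h₁ : x ≠ y) (h₂ : x ≠ y + 1) : piXgY a b x y = 0 := by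
  simp [piXgY, h₁, h₂]

lemma piYgX_self {x : ℕ} (hx : 1 ≤ x) : piYgX a b x x = a x / (a x + b (x - 1)) := by
  simp [piYgX, show x ≠ x - 1 by omega]

lemma piYgX_pred_self {x : ℕ} (hx : 1 ≤ x) :
    piYgX a b (x - 1) x = b (x - 1) / (a x + b (x - 1)) := by
  simp [piYgX, show x - 1 ≠ x by omega]

lemma piYgX_eq_zero {x y : ℕ} (h₁ : y ≠ x) (h₂ : y ≠ x - 1) : piYgX a b y x = 0 := by
  simp [piYgX, h₁, h₂]

-- From `x` the `Y`-step only reaches `x` and `x - 1`; for `x = 1` the latter is `0`, outside the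
-- summation range, but its weight `b 0` vanishes, so one formula covers every `x ≥ 1`.
lemma kBD_eq (hb0 : b 0 = 0) {x : ℕ} (hx : 1 ≤ x) (x' : ℕ) :
    kBD a b x x' = piXgY a b x' x * (a x / (a x + b (x - 1))) +
      piXgY a b x' (x - 1) * (b (x - 1) / (a x + b (x - 1))) := by
  set g : ℕ → ℝ := fun y => piXgY a b x' y * piYgX a b y x
  have hsupp : g.support ⊆ Set.range Nat.succ := by
    rintro (_ | y) hy
    · refine absurd ?_ hy
      rcases Nat.eq_or_lt_of_le hx with rfl | hx
      · simp [g, piYgX, hb0]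
      · simp [g, piYgX_eq_zero (show 0 ≠ x by omega) (show 0 ≠ x - 1 by omega)]
    · exact ⟨y, rfl⟩
  have hg : ∀ y ∉ ({x, x - 1} : Finset ℕ), g y = 0 := by
    intro y hy
    simp only [Finset.mem_insert, Finset.mem_singleton, not_or] at hy
    simp [g, piYgX_eq_zero hy.1 hy.2]
  calc kBD a b x x' = ∑' y, g y := Nat.succ_injective.tsum_eq hsupp
    _ = g x + g (x - 1) := by
      rw [tsum_eq_sum hg, Finset.sum_pair (by omega)]
    _ = _ := by simp only [g, piYgX_self hx, piYgX_pred_self hx]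

lemma kBD_succ (hb0 : b 0 = 0) {x : ℕ} (hx : 1 ≤ x) : kBD a b x (x + 1) = pBD a b x := by
  rw [kBD_eq hb0 hx, piXgY_succ_self, piXgY_eq_zero (by omega) (by omega), zero_mul,
    add_zero, div_mul_div_comm, pBD]
  ring

lemma kBD_pred (hb0 : b 0 = 0) {x : ℕ} (hx : 2 ≤ x) : kBD a b x (x - 1) = qBD a b x := by
  rw [kBD_eq hb0 (by omega), piXgY_self, piXgY_eq_zero (by omega) (by omega), zero_mul,
    zero_add, div_mul_div_comm, qBD]
  ring

lemma kBD_eq_zero (hb0 : b 0 = 0) {x x' : ℕ} (hx : 1 ≤ x) (hself : x' ≠ x)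
    (hsucc : x' ≠ x + 1) (hpred : x' ≠ x - 1) : kBD a b x x' = 0 := by
  rw [kBD_eq hb0 hx, piXgY_eq_zero hself hsucc, piXgY_eq_zero hpred (by omega)]
  ring

lemma holding_weight_eq {u v s t : ℝ} (huv : u + v ≠ 0) (hut : u + t ≠ 0)
    (hst : s + t = 0 → t = 0) :
    u / (u + v) * (u / (u + t)) + t / (s + t) * (t / (u + t)) =
      1 - u * v / ((u + t) * (u + v)) - s * t / ((u + t) * (s + t)) := by
  by_cases hst' : s + t = 0
  · obtain rfl := hst hst'
    obtain rfl : s = 0 := by simpa using hst'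
    simp only [add_zero] at hut ⊢
    field_simp
    ring
  · field_simp
    ring

lemma kBD_self (ha : ∀ x, 1 ≤ x → 0 < a x) (hb : ∀ x, 1 ≤ x → 0 < b x) (hb0 : b 0 = 0)
    {x : ℕ} (hx : 1 ≤ x) : kBD a b x x = rBD a b x := by
  have hbx : 0 < b x := hb x hx
  have hax : 0 < a x := ha x hx
  obtain ⟨hbpred, hst⟩ : 0 ≤ b (x - 1) ∧ (a (x - 1) + b (x - 1) = 0 → b (x - 1) = 0) := by
    rcases Nat.eq_or_lt_of_le hx with rfl | hx
    · exact ⟨hb0.ge, fun _ => hb0⟩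
    · have hapred := ha (x - 1) (by omega)
      have hbpred := hb (x - 1) (by omega)
      exact ⟨hbpred.le, fun _ => by linarith⟩
  rw [kBD_eq hb0 hx, piXgY_self, piXgY_pred_self hx]
  exact holding_weight_eq (by positivity) (by positivity) hst

lemma qBD_one (hb0 : b 0 = 0) : qBD a b 1 = 0 := by
  simp [qBD, hb0]

end

theorem stmt12 (a b : ℕ → ℝ) (ha : ∀ x, 1 ≤ x → 0 < a x) (hb : ∀ x, 1 ≤ x → 0 < b x)
    (hb0 : b 0 = 0) :
    kBD a b 1 1 = 1 - pBD a b 1 ∧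
      (∀ x, 1 ≤ x → kBD a b x (x + 1) = pBD a b x) ∧
      (∀ x, 2 ≤ x → kBD a b x (x - 1) = qBD a b x) ∧
      (∀ x, 2 ≤ x → kBD a b x x = rBD a b x) ∧
      (∀ x x', 1 ≤ x → 1 ≤ x' → x' ≠ x → x' ≠ x + 1 → x' ≠ x - 1 → kBD a b x x' = 0) := by
  refine ⟨?_, fun x hx => kBD_succ hb0 hx, fun x hx => kBD_pred hb0 hx,
    fun x hx => kBD_self ha hb hb0 (by omega),
    fun x x' hx _ hself hsucc hpred => kBD_eq_zero hb0 hx hself hsucc hpred⟩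
  rw [kBD_self ha hb hb0 le_rfl, rBD, qBD_one hb0, sub_zero]
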